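/- arXiv:2304.05204 — 5 statements merged into one kernel-verified Lean document; each statement's English description precedes it below -/
import Mathlib

section
/- Fix λ > 0 and a > 0. Then as n → ∞, (log n / n)^{e^λ (1 - λ/n)^{n - an/log n}} = (log n / n) · e^{-λa} · (1 + λa·(log log n)/log n + O(1/log n)). -/
/-!
Write `x = log t`. Since `log (1 - λ/t) = -λ/t + O(t⁻²)`, the exponent
`E = e^λ (1 - λ/t)^(t - a t/x)` is `exp (λa/x + O(1/t))`, so `E - 1 = λa/x + O(x⁻²)`.
Then `(x/t)^E = (x/t) e^(-λa) e^G` with `G = (E - 1) log (x/t) + λa = λa log x / x + O(1/x)`,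
and `e^G = 1 + G + O(G²)` where `G² = O((log x)²/x²) = O(1/x)`.
-/

open Filter Asymptotics Real Topology

lemma Real.isBigO_exp_sub_one_sub_self :
    (fun x : ℝ => exp x - 1 - x) =O[𝓝 0] fun x => x ^ 2 := by
  simpa [Finset.sum_range_succ, sub_sub] using exp_sub_sum_range_isBigO_pow 2

lemma Real.isBigO_log_one_sub_add_self :
    (fun s : ℝ => log (1 - s) + s) =O[𝓝 0] fun s => s ^ 2 := by
  refine IsBigO.of_bound 2 ?_
  filter_upwards [Metric.ball_mem_nhds (0 : ℝ) one_half_pos] with s hs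
  rw [Metric.mem_ball, dist_zero_right, norm_eq_abs] at hs
  have h := abs_log_sub_add_sum_range_le (x := s) (by linarith) 1
  simp only [Finset.sum_range_one, zero_add, pow_one, CharP.cast_eq_zero, div_one, one_add_one_eq_two, sq_abs] at h
  rw [norm_eq_abs, norm_eq_abs, abs_of_nonneg (sq_nonneg s), add_comm]
  calc |s + log (1 - s)| ≤ s ^ 2 / (1 - |s|) := h
    _ ≤ 2 * s ^ 2 := by
      rw [div_le_iff₀ (by linarith)]
      nlinarith [sq_nonneg s, abs_nonneg s]

lemma Real.isBigO_inv_inv_log_pow (n : ℕ) :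
    (fun t : ℝ => t⁻¹) =O[atTop] fun t => (log t)⁻¹ ^ n := by
  simp_rw [inv_pow]
  refine isLittleO_pow_log_id_atTop.isBigO.inv_rev ?_
  filter_upwards [eventually_gt_atTop 1] with t ht h
  exact absurd h (pow_ne_zero _ (log_pos ht).ne')

lemma Real.isLittleO_log_log_log : (fun t => log (log t)) =o[atTop] log :=
  isLittleO_log_id_atTop.comp_tendsto tendsto_log_atTop

lemma Real.isBigO_log_log_sq_log : (fun t => log (log t) ^ 2) =O[atTop] log :=
  (isLittleO_pow_log_id_atTop.comp_tendsto tendsto_log_atTop).isBigO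

lemma Real.isBigO_one_log_log : (fun _ => (1 : ℝ)) =O[atTop] fun t => log (log t) :=
  (isLittleO_one_left_iff ℝ).2 (tendsto_norm_atTop_atTop.comp
    (tendsto_log_atTop.comp tendsto_log_atTop)) |>.isBigO

section

variable (l a : ℝ)

noncomputable def expFactor (t : ℝ) : ℝ := exp l * (1 - l / t) ^ (t - a * t / log t)

noncomputable def logCorrection (t : ℝ) : ℝ :=
  (expFactor l a t - 1) * log (log t / t) + l * a

lemma expFactor_eventuallyEq_exp :
    expFactor l a =ᶠ[atTop]
      fun t => exp (l * a / log t + (t - a * t / log t) * (log (1 - l / t) + l / t)) := by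
  filter_upwards [eventually_gt_atTop (max l 1)] with t ht
  have ht1 : 1 < t := (le_max_right _ _).trans_lt ht
  have hlt : 0 < 1 - l / t := by
    rw [sub_pos, div_lt_one (by linarith)]; exact (le_max_left _ _).trans_lt ht
  have hlog : log t ≠ 0 := (log_pos ht1).ne'
  rw [expFactor, rpow_def_of_pos hlt, ← exp_add]
  congr 1
  field_simp
  ring

lemma isBigO_expFactor_remainder :
    (fun t => (t - a * t / log t) * (log (1 - l / t) + l / t)) =O[atTop] fun t => t⁻¹ := by
  have hq : (fun t => log (1 - l / t) + l / t) =O[atTop] fun t => (l / t) ^ 2 :=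
    isBigO_log_one_sub_add_self.comp_tendsto (tendsto_const_nhds.div_atTop tendsto_id)
  have hm : (fun t => 1 - a / log t) =O[atTop] fun _ => (1 : ℝ) := by
    refine Tendsto.isBigO_one ℝ (c := 1 - 0) ?_
    exact tendsto_const_nhds.sub (tendsto_const_nhds.div_atTop tendsto_log_atTop)
  refine (((isBigO_refl (fun t : ℝ => t) atTop).mul hm).mul hq).congr' ?_ ?_ |>.trans
    ((isBigO_refl (fun t : ℝ => t⁻¹) atTop).const_mul_left (l ^ 2))
  · filter_upwards [eventually_gt_atTop 1] with t ht
    have hlog : log t ≠ 0 := (log_pos ht).ne'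
    field_simp
  · filter_upwards [eventually_gt_atTop 0] with t ht
    field_simp

lemma isBigO_expFactor_sub_one_sub :
    (fun t => expFactor l a t - 1 - l * a / log t) =O[atTop] fun t => (log t)⁻¹ ^ 2 := by
  set r := fun t => (t - a * t / log t) * (log (1 - l / t) + l / t)
  have hr : r =O[atTop] fun t => t⁻¹ := isBigO_expFactor_remainder l a
  have hu : (fun t => l * a / log t + r t) =O[atTop] fun t => (log t)⁻¹ := by
    refine IsBigO.add ?_ (by simpa using hr.trans (isBigO_inv_inv_log_pow 1))
    simpa only [div_eq_mul_inv] using (isBigO_refl (fun t => (log t)⁻¹) _).const_mul_left (l * a)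
  have hu0 : Tendsto (fun t => l * a / log t + r t) atTop (𝓝 0) :=
    hu.trans_tendsto (tendsto_inv_atTop_zero.comp tendsto_log_atTop)
  have hexp := (isBigO_exp_sub_one_sub_self.comp_tendsto hu0).trans (hu.pow 2)
  refine (hexp.add (hr.trans (isBigO_inv_inv_log_pow 2))).congr' ?_ EventuallyEq.rfl
  filter_upwards [expFactor_eventuallyEq_exp l a] with t ht
  simp only [Function.comp_apply, ht]
  ring

lemma logCorrection_eventuallyEq :
    logCorrection l a =ᶠ[atTop] fun t => l * a * log (log t) / log t +
      (expFactor l a t - 1 - l * a / log t) * (log (log t) - log t) := by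
  filter_upwards [eventually_gt_atTop 1] with t ht
  have hlog : log t ≠ 0 := (log_pos ht).ne'
  rw [logCorrection, log_div hlog (by linarith)]
  field_simp
  ring

lemma isBigO_logCorrection_sub :
    (fun t => logCorrection l a t - l * a * log (log t) / log t) =O[atTop]
      fun t => (log t)⁻¹ := by
  have hdiff : (fun t => log (log t) - log t) =O[atTop] log :=
    isLittleO_log_log_log.isBigO.sub (isBigO_refl _ _)
  refine ((isBigO_expFactor_sub_one_sub l a).mul hdiff).congr' ?_ ?_
  · filter_upwards [logCorrection_eventuallyEq l a] with t ht
    rw [ht]; ring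
  · filter_upwards [eventually_gt_atTop 1] with t ht
    have hlog : log t ≠ 0 := (log_pos ht).ne'
    field_simp

lemma isBigO_logCorrection :
    logCorrection l a =O[atTop] fun t => log (log t) * (log t)⁻¹ := by
  have hinv : (fun t => (log t)⁻¹) =O[atTop] fun t => log (log t) * (log t)⁻¹ := by
    simpa using isBigO_one_log_log.mul (isBigO_refl (fun t => (log t)⁻¹) atTop)
  have hmain : (fun t => l * a * log (log t) / log t) =O[atTop]
      fun t => log (log t) * (log t)⁻¹ := by
    simpa only [mul_assoc, div_eq_mul_inv] using
      (isBigO_refl (fun t => log (log t) * (log t)⁻¹) atTop).const_mul_left (l * a)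
  simpa using ((isBigO_logCorrection_sub l a).trans hinv).add hmain

lemma isBigO_exp_logCorrection_sub :
    (fun t => exp (logCorrection l a t) - 1 - l * a * log (log t) / log t) =O[atTop]
      fun t => (log t)⁻¹ := by
  have hG0 : Tendsto (logCorrection l a) atTop (𝓝 0) :=
    (isBigO_logCorrection l a).trans_tendsto <| by
      simpa only [div_eq_mul_inv] using isLittleO_log_log_log.tendsto_div_nhds_zero
  have hsq : (fun t => (log (log t) * (log t)⁻¹) ^ 2) =O[atTop] fun t => (log t)⁻¹ := by
    refine (isBigO_log_log_sq_log.mul (isBigO_refl (fun t => (log t)⁻¹ ^ 2) atTop)).congr' ?_ ?_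
    · exact EventuallyEq.of_eq (funext fun t => by ring)
    · filter_upwards [eventually_gt_atTop 1] with t ht
      have hlog : log t ≠ 0 := (log_pos ht).ne'
      field_simp
  have hexp := ((isBigO_exp_sub_one_sub_self.comp_tendsto hG0).trans
    ((isBigO_logCorrection l a).pow 2)).trans hsq
  simpa using hexp.add (isBigO_logCorrection_sub l a)

lemma rpow_expFactor_eq {t : ℝ} (ht : 1 < t) :
    (log t / t) ^ expFactor l a t = log t / t * exp (-(l * a)) * exp (logCorrection l a t) := by
  have hb : 0 < log t / t := div_pos (log_pos ht) (by linarith)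
  rw [rpow_def_of_pos hb, logCorrection, ← exp_log hb, ← exp_add, ← exp_add, exp_log hb]
  ring_nf

end

theorem rpow_exp_factor_asymp_general (l a : ℝ) :
    ∃ ε : ℕ → ℝ, (ε =O[atTop] fun n : ℕ => 1 / Real.log n) ∧
      ∀ᶠ n : ℕ in atTop,
        (Real.log n / n) ^ (Real.exp l * (1 - l / n) ^ ((n : ℝ) - a * n / Real.log n))
          = (Real.log n / n) * Real.exp (-(l * a)) *
              (1 + l * a * Real.log (Real.log n) / Real.log n + ε n) := by
  refine ⟨fun n => exp (logCorrection l a n) - 1 - l * a * log (log n) / log n, ?_, ?_⟩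
  · simpa only [one_div, Function.comp_def] using
      (isBigO_exp_logCorrection_sub l a).comp_tendsto tendsto_natCast_atTop_atTop
  · filter_upwards [tendsto_natCast_atTop_atTop.eventually_gt_atTop (1 : ℝ)] with n hn
    exact (rpow_expFactor_eq l a hn).trans (by ring)

/-- `(log n / n)^{e^λ (1-λ/n)^{n - an/log n}}
      = (log n / n) · e^{-λa} · (1 + λa·(log log n)/log n + O(1/log n))`. -/
theorem rpow_exp_factor_asymp (l a : ℝ) (hl : 0 < l) (ha : 0 < a) :
    ∃ ε : ℕ → ℝ, (ε =O[atTop] fun n : ℕ => 1 / Real.log n) ∧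
      ∀ᶠ n : ℕ in atTop,
        (Real.log n / n) ^ (Real.exp l * (1 - l / n) ^ ((n : ℝ) - a * n / Real.log n))
          = (Real.log n / n) * Real.exp (-(l * a)) *
              (1 + l * a * Real.log (Real.log n) / Real.log n + ε n) :=
  rpow_exp_factor_asymp_general l a
end

section
/- Fix λ > 0 and a > 0. Then as n → ∞, (log n/n)^{e^λ (1-λ/n)^{n - a n (log log n)/log n}} = exp(-(log n + (λa - 1) log log n + O((log log n)²/log n))). -/
open Filter Asymptotics Real

set_option maxHeartbeats 1000000 in
lemma aux_bound (l a : ℝ) (hl : 0 < l) (ha : 0 < a) (n : ℕ)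
    (hL3 : 3 ≤ Real.log n) (hn2 : (2:ℝ) ≤ n)
    (hB : l / n ≤ 1/2)
    (hC : a * (Real.log (Real.log n) / Real.log n) ≤ 1/2)
    (hD : 2*l^2 * (Real.log n / n) ≤ 1)
    (hE : (Real.log n)^2 / n ≤ 1)
    (hF : (l*a+1) * (Real.log (Real.log n) / Real.log n) ≤ 1) :
    |Real.exp (l + ((n:ℝ) - a*n*Real.log (Real.log n)/Real.log n) * Real.log (1 - l/n))
        * (Real.log n - Real.log (Real.log n)) - Real.log n - (l*a-1)*Real.log (Real.log n)|
      ≤ ((l*a+1)^2 + 2*l^2 + (l*a+1)) * ((Real.log (Real.log n))^2 / Real.log n) := by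
  have hn0 : (0:ℝ) < n := by linarith
  set L : ℝ := Real.log n with hLdef
  set LL : ℝ := Real.log L with hLLdef
  set t : ℝ := l / n with htdef
  set r : ℝ := Real.log (1 - t) + t with hrdef
  set w : ℝ := (n:ℝ) - a*n*LL/L with hwdef
  set δ : ℝ := l + w * Real.log (1-t) with hδdef
  have hL0 : 0 < L := by linarith
  have hLL1 : 1 ≤ LL := by
    rw [hLLdef, Real.le_log_iff_exp_le hL0]
    calc Real.exp 1 ≤ 2.7182818286 := Real.exp_one_lt_d9.le
    _ ≤ L := by linarith
  have hLLle : LL ≤ L := hLLdef ▸ (Real.log_le_self hL0.le)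
  have ht : 0 < t := htdef ▸ div_pos hl hn0
  have hx : 0 < 1 - t := by linarith
  have hr1 : r ≤ 0 := by
    have := Real.log_le_sub_one_of_pos hx
    rw [hrdef]; linarith
  have hr2 : -(2*t^2) ≤ r := by
    have h1 := Real.one_sub_inv_le_log_of_pos hx
    have hinv : (1-t) * (1-t)⁻¹ = 1 := mul_inv_cancel₀ hx.ne'
    have hinvpos : 0 < (1-t)⁻¹ := inv_pos.mpr hx
    have h9 : (1-t)⁻¹ ≤ 1 + t + 2*t^2 := by
      nlinarith [mul_nonneg (mul_nonneg ht.le ht.le) (show (0:ℝ) ≤ 1 - 2*t by linarith)]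
    rw [hrdef]; linarith
  have hδeq : δ = l*a*(LL/L) + w*r := by
    have h1 : Real.log (1-t) = r - t := by rw [hrdef]; ring
    have h2 : w * t = l - l*a*(LL/L) := by
      rw [hwdef, htdef]; field_simp
    rw [hδdef, h1, mul_sub, h2]; ring
  clear_value δ w r t LL L
  have hrabs : |r| ≤ 2*t^2 := abs_le.mpr ⟨by linarith, by linarith⟩
  have hweq : w = n * (1 - a*(LL/L)) := by rw [hwdef]; ring
  have haLL0 : 0 ≤ a * (LL/L) := by positivity
  have hw0 : 0 ≤ w := by rw [hweq]; nlinarith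
  have hwn : w ≤ n := by rw [hweq]; nlinarith [mul_nonneg hn0.le haLL0]
  have hwr : |w*r| ≤ 2*l^2/n := by
    rw [abs_mul, abs_of_nonneg hw0]
    calc w * |r| ≤ (n:ℝ) * (2*t^2) := by
          apply mul_le_mul hwn hrabs (abs_nonneg r) hn0.le
      _ = 2*l^2/n := by rw [htdef]; field_simp
  have h2ln : 2*l^2/(n:ℝ) ≤ LL/L := by
    have e1 : 2*l^2/(n:ℝ) = (2*l^2*(L/n))/L := by field_simp
    rw [e1]
    gcongr
    linarith
  have hδabs : |δ| ≤ (l*a+1)*(LL/L) := by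
    rw [hδeq]
    calc |l*a*(LL/L) + w*r| ≤ |l*a*(LL/L)| + |w*r| := abs_add_le _ _
      _ = l*a*(LL/L) + |w*r| := by rw [abs_of_nonneg (by positivity)]
      _ ≤ l*a*(LL/L) + LL/L := by linarith [hwr.trans h2ln]
      _ = (l*a+1)*(LL/L) := by ring
  have hδ1 : |δ| ≤ 1 := hδabs.trans hF
  have hexp : |Real.exp δ - 1 - δ| ≤ δ^2 := Real.abs_exp_sub_one_sub_id_le hδ1
  have hδL : δ * L = l*a*LL + w*r*L := by
    have hc : LL/L*L = LL := div_mul_cancel₀ LL hL0.ne'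
    linear_combination L * hδeq + l*a*hc
  have hdecomp : Real.exp δ * (L - LL) - L - (l*a-1)*LL
      = (Real.exp δ - 1 - δ)*(L - LL) + w*r*L - δ*LL := by
    linear_combination hδL
  have habs3 : |Real.exp δ * (L - LL) - L - (l*a-1)*LL|
      ≤ |Real.exp δ - 1 - δ| * (L - LL) + |w*r| * L + |δ| * LL := by
    rw [hdecomp]
    calc |(Real.exp δ - 1 - δ)*(L - LL) + w*r*L - δ*LL|
        ≤ |(Real.exp δ - 1 - δ)*(L - LL) + w*r*L| + |δ*LL| := abs_sub _ _
      _ ≤ |(Real.exp δ - 1 - δ)*(L - LL)| + |w*r*L| + |δ*LL| := by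
          linarith [abs_add_le ((Real.exp δ - 1 - δ)*(L - LL)) (w*r*L)]
      _ = |Real.exp δ - 1 - δ| * (L - LL) + |w*r| * L + |δ| * LL := by
          rw [abs_mul (Real.exp δ - 1 - δ) (L - LL), abs_mul (w*r) L, abs_mul δ LL,
            abs_of_nonneg (by linarith : (0:ℝ) ≤ L - LL),
            abs_of_nonneg hL0.le, abs_of_nonneg (by linarith : (0:ℝ) ≤ LL)]
  have B1 : |Real.exp δ - 1 - δ| * (L - LL) ≤ (l*a+1)^2 * (LL^2/L) := by
    have hδsq : δ^2 ≤ ((l*a+1)*(LL/L))^2 := by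
      rw [← sq_abs]
      exact pow_le_pow_left₀ (abs_nonneg δ) hδabs 2
    calc |Real.exp δ - 1 - δ| * (L - LL) ≤ δ^2 * L := by
          apply mul_le_mul hexp (by linarith) (by linarith) (sq_nonneg δ)
      _ ≤ ((l*a+1)*(LL/L))^2 * L := by nlinarith
      _ = (l*a+1)^2 * (LL^2/L) := by field_simp
  have B2 : |w*r| * L ≤ 2*l^2 * (LL^2/L) := by
    calc |w*r| * L ≤ (2*l^2/n)*L := by
          apply mul_le_mul_of_nonneg_right hwr hL0.le
      _ = 2*l^2 * ((L^2/n)/L) := by field_simp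
      _ ≤ 2*l^2 * (LL^2/L) := by
          have h1 : (L^2/n)/L ≤ LL^2/L := by
            gcongr
            nlinarith
          exact mul_le_mul_of_nonneg_left h1 (by positivity)
  have B3 : |δ| * LL ≤ (l*a+1) * (LL^2/L) := by
    calc |δ| * LL ≤ ((l*a+1)*(LL/L))*LL := by
          apply mul_le_mul_of_nonneg_right hδabs (by linarith)
      _ = (l*a+1) * (LL^2/L) := by field_simp
  calc |Real.exp δ * (L - LL) - L - (l*a-1)*LL|
      ≤ |Real.exp δ - 1 - δ| * (L - LL) + |w*r| * L + |δ| * LL := habs3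
    _ ≤ (l*a+1)^2 * (LL^2/L) + 2*l^2 * (LL^2/L) + (l*a+1) * (LL^2/L) := by
        linarith
    _ = ((l*a+1)^2 + 2*l^2 + (l*a+1)) * (LL^2/L) := by ring

/-- `(log n/n)^{e^λ (1-λ/n)^{n - a n (log log n)/log n}}
      = exp(-(log n + (λa - 1) log log n + O((log log n)²/log n)))`. -/
theorem rpow_loglog_exponent_asymp (l a : ℝ) (hl : 0 < l) (ha : 0 < a) :
    ∃ ε : ℕ → ℝ,
      (ε =O[atTop] fun n : ℕ => (Real.log (Real.log n)) ^ 2 / Real.log n) ∧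
      ∀ᶠ n : ℕ in atTop,
        (Real.log n / n) ^ (Real.exp l *
            (1 - l / n) ^ ((n : ℝ) - a * n * Real.log (Real.log n) / Real.log n))
          = Real.exp (-(Real.log n + (l * a - 1) * Real.log (Real.log n) + ε n)) := by
  refine ⟨fun n => Real.exp (l + ((n:ℝ) - a*n*Real.log (Real.log n)/Real.log n)
        * Real.log (1 - l/n)) * (Real.log n - Real.log (Real.log n))
      - Real.log n - (l*a-1)*Real.log (Real.log n), ?_, ?_⟩
  · -- the O-bound
    have tn : Tendsto (fun n : ℕ => (n:ℝ)) atTop atTop := tendsto_natCast_atTop_atTop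
    have tL : Tendsto (fun n : ℕ => Real.log n) atTop atTop :=
      Real.tendsto_log_atTop.comp tn
    have tlog : Tendsto (fun x : ℝ => Real.log x / x) atTop (nhds 0) := by
      simpa using Real.tendsto_pow_log_div_mul_add_atTop 1 0 1 one_ne_zero
    have tlog2 : Tendsto (fun x : ℝ => (Real.log x)^2 / x) atTop (nhds 0) := by
      simpa using Real.tendsto_pow_log_div_mul_add_atTop 1 0 2 one_ne_zero
    have tLLL : Tendsto (fun n : ℕ => Real.log (Real.log n) / Real.log n) atTop (nhds 0) :=
      tlog.comp tL
    have hA : ∀ᶠ n : ℕ in atTop, 3 ≤ Real.log n := tL.eventually_ge_atTop 3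
    have hn2 : ∀ᶠ n : ℕ in atTop, (2:ℝ) ≤ (n:ℝ) := tn.eventually_ge_atTop 2
    have hB : ∀ᶠ n : ℕ in atTop, l / n ≤ 1/2 := by
      have h := tendsto_const_nhds.div_atTop (f := fun _ : ℕ => l) tn
      exact h.eventually (eventually_le_nhds (by norm_num))
    have hC : ∀ᶠ n : ℕ in atTop,
        a * (Real.log (Real.log n) / Real.log n) ≤ 1/2 := by
      have h := tLLL.const_mul a
      rw [mul_zero] at h
      exact h.eventually (eventually_le_nhds (by norm_num))
    have hD : ∀ᶠ n : ℕ in atTop, 2*l^2 * (Real.log n / n) ≤ 1 := by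
      have h := (tlog.comp tn).const_mul (2*l^2)
      rw [mul_zero] at h
      exact h.eventually (eventually_le_nhds (by norm_num))
    have hE : ∀ᶠ n : ℕ in atTop, (Real.log n)^2 / n ≤ 1 :=
      (tlog2.comp tn).eventually (eventually_le_nhds (by norm_num))
    have hF : ∀ᶠ n : ℕ in atTop,
        (l*a+1) * (Real.log (Real.log n) / Real.log n) ≤ 1 := by
      have h := tLLL.const_mul (l*a+1)
      rw [mul_zero] at h
      exact h.eventually (eventually_le_nhds (by norm_num))
    rw [isBigO_iff]
    refine ⟨(l*a+1)^2 + 2*l^2 + (l*a+1), ?_⟩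
    filter_upwards [hA, hn2, hB, hC, hD, hE, hF] with n h1 h2 h3 h4 h5 h6 h7
    have hb := aux_bound l a hl ha n h1 h2 h3 h4 h5 h6 h7
    have hL0 : (0:ℝ) < Real.log n := by linarith
    rw [Real.norm_eq_abs, Real.norm_eq_abs,
      abs_of_nonneg (show (0:ℝ) ≤ (Real.log (Real.log n))^2 / Real.log n by positivity)]
    exact hb
  · -- the eventual equality
    have tn : Tendsto (fun n : ℕ => (n:ℝ)) atTop atTop := tendsto_natCast_atTop_atTop
    have tL : Tendsto (fun n : ℕ => Real.log n) atTop atTop :=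
      Real.tendsto_log_atTop.comp tn
    have hA : ∀ᶠ n : ℕ in atTop, 3 ≤ Real.log n := tL.eventually_ge_atTop 3
    have hn2 : ∀ᶠ n : ℕ in atTop, (2:ℝ) ≤ (n:ℝ) := tn.eventually_ge_atTop 2
    have hB : ∀ᶠ n : ℕ in atTop, l / n ≤ 1/2 := by
      have h := tendsto_const_nhds.div_atTop (f := fun _ : ℕ => l) tn
      exact h.eventually (eventually_le_nhds (by norm_num))
    filter_upwards [hA, hn2, hB] with n h1 h2 h3
    have hn0 : (0:ℝ) < n := by linarith
    have hL0 : 0 < Real.log n := by linarith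
    have hx : (0:ℝ) < 1 - l/n := by linarith
    have hbase : 0 < Real.log n / n := div_pos hL0 hn0
    rw [Real.rpow_def_of_pos hx, ← Real.exp_add, Real.rpow_def_of_pos hbase,
      Real.log_div hL0.ne' hn0.ne', mul_comm (Real.log (1 - l/(n:ℝ))), Real.exp_eq_exp]
    ring
end

section
/- Consider a marked Poisson process of rate 1 where each arriving coupon independently has type i with probability p_i (0 ≤ i ≤ n, ∑ p_i = 1, all p_i > 0). Let T be the first time all types in {1,...,n} have appeared and D the number of arrivals up to and including time T. Then for all sufficiently large d, F_D(d) ≤ F_T(d + d^{3/4}) + (d + d^{3/4})^{-1/3} and F_D(d) ≥ F_T(d - d^{3/4}) - (d - d^{3/4})^{-1/3}, where F_D and F_T are the respective CDFs. -/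
open MeasureTheory ProbabilityTheory Real


lemma tsum_exp_series (t : ℝ) : ∑' k : ℕ, t ^ k / k.factorial = Real.exp t := by
  rw [Real.exp_eq_exp_ℝ, NormedSpace.exp_eq_tsum_div]

lemma summable_f (t : ℝ) : Summable (fun k : ℕ => t ^ k / k.factorial) :=
  Real.summable_pow_div_factorial t

lemma g_succ (t : ℝ) (k : ℕ) :
    ((k+1 : ℕ) : ℝ) * t ^ (k+1) / (k+1).factorial = t * (t ^ k / k.factorial) := by
  rw [Nat.factorial_succ, pow_succ]
  push_cast
  have h1 : (k.factorial : ℝ) ≠ 0 := Nat.cast_ne_zero.mpr k.factorial_pos.ne'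
  have h2 : ((k : ℝ) + 1) ≠ 0 := by positivity
  field_simp

lemma summable_g (t : ℝ) : Summable (fun k : ℕ => (k : ℝ) * t ^ k / k.factorial) := by
  rw [← summable_nat_add_iff 1]
  exact ((summable_f t).mul_left t).congr fun k => (g_succ t k).symm

lemma tsum_g (t : ℝ) : ∑' k : ℕ, (k : ℝ) * t ^ k / k.factorial = t * Real.exp t := by
  rw [Summable.tsum_eq_zero_add (summable_g t)]
  rw [tsum_congr (g_succ t), tsum_mul_left, tsum_exp_series]
  simp

lemma h_succ (t : ℝ) (k : ℕ) :
    ((k+2 : ℕ) : ℝ) * (((k+2 : ℕ) : ℝ) - 1) * t ^ (k+2) / (k+2).factorial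
      = t^2 * (t ^ k / k.factorial) := by
  rw [Nat.factorial_succ, Nat.factorial_succ, pow_succ, pow_succ]
  push_cast
  have h1 : (k.factorial : ℝ) ≠ 0 := Nat.cast_ne_zero.mpr k.factorial_pos.ne'
  have h2 : ((k : ℝ) + 1) ≠ 0 := by positivity
  have h3 : ((k : ℝ) + 1 + 1) ≠ 0 := by positivity
  field_simp
  ring

lemma summable_h (t : ℝ) :
    Summable (fun k : ℕ => (k : ℝ) * ((k : ℝ) - 1) * t ^ k / k.factorial) := by
  rw [← summable_nat_add_iff 2]
  exact ((summable_f t).mul_left (t^2)).congr fun k => (h_succ t k).symm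

lemma tsum_h (t : ℝ) :
    ∑' k : ℕ, (k : ℝ) * ((k : ℝ) - 1) * t ^ k / k.factorial = t^2 * Real.exp t := by
  rw [Summable.tsum_eq_zero_add (summable_h t),
    Summable.tsum_eq_zero_add ((summable_nat_add_iff 1).mpr (summable_h t))]
  have : ∀ k:ℕ, ((k+1+1:ℕ):ℝ) * (((k+1+1:ℕ):ℝ) - 1) * t ^ (k+1+1) / (k+1+1).factorial
      = t^2 * (t ^ k / k.factorial) := fun k => h_succ t k
  rw [tsum_congr this, tsum_mul_left, tsum_exp_series]
  norm_num

lemma sq_decomp (t : ℝ) (k : ℕ) :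
    ((k:ℝ) - t)^2 * t ^ k / k.factorial
      = (k : ℝ) * ((k : ℝ) - 1) * t ^ k / k.factorial
        + (1 - 2*t) * ((k : ℝ) * t ^ k / k.factorial)
        + t^2 * (t ^ k / k.factorial) := by
  ring

lemma summable_sq (t : ℝ) :
    Summable (fun k : ℕ => ((k:ℝ) - t)^2 * t ^ k / k.factorial) := by
  have := (summable_h t).add (((summable_g t).mul_left (1 - 2*t)).add ((summable_f t).mul_left (t^2)))
  refine this.congr fun k => ?_
  simp only [sq_decomp t k]
  ring

lemma tsum_sq (t : ℝ) :
    ∑' k : ℕ, ((k:ℝ) - t)^2 * t ^ k / k.factorial = t * Real.exp t := by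
  calc ∑' k : ℕ, ((k:ℝ) - t)^2 * t ^ k / k.factorial
      = ∑' k : ℕ, ((k : ℝ) * ((k : ℝ) - 1) * t ^ k / k.factorial
        + ((1 - 2*t) * ((k : ℝ) * t ^ k / k.factorial)
        + t^2 * (t ^ k / k.factorial))) := by
        refine tsum_congr fun k => ?_
        rw [sq_decomp t k]; ring
    _ = t^2 * Real.exp t + ((1-2*t) * (t * Real.exp t) + t^2 * Real.exp t) := by
        rw [Summable.tsum_add (summable_h t) (((summable_g t).mul_left _).add ((summable_f t).mul_left _)),
          Summable.tsum_add ((summable_g t).mul_left _) ((summable_f t).mul_left _),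
          tsum_h, tsum_mul_left, tsum_mul_left, tsum_g, tsum_exp_series]
    _ = t * Real.exp t := by ring

lemma poisson_moment (t : ℝ) :
    ∑' k : ℕ, ((k:ℝ) - t)^2 * (Real.exp (-t) * t ^ k / k.factorial) = t := by
  have h : ∀ k:ℕ, ((k:ℝ) - t)^2 * (Real.exp (-t) * t ^ k / k.factorial)
      = Real.exp (-t) * (((k:ℝ) - t)^2 * t ^ k / k.factorial) := fun k => by ring
  rw [tsum_congr h, tsum_mul_left, tsum_sq, Real.exp_neg]
  field_simp

lemma summable_moment (t : ℝ) :
    Summable (fun k : ℕ => ((k:ℝ) - t)^2 * (Real.exp (-t) * t ^ k / k.factorial)) := by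
  refine ((summable_sq t).mul_left (Real.exp (-t))).congr fun k => by ring

lemma poisson_cheb {Ω : Type*} [MeasurableSpace Ω] (μ : Measure Ω) [IsProbabilityMeasure μ]
    (N : Ω → ℕ) (hN : Measurable N) (t a : ℝ) (ht : 0 < t) (ha : 0 < a)
    (hpois : ∀ k : ℕ, μ {ω | N ω = k} = ENNReal.ofReal (Real.exp (-t) * t ^ k / k.factorial))
    (S : Set ℕ) (hS : ∀ k ∈ S, a^2 ≤ ((k:ℝ) - t)^2) :
    (μ {ω | N ω ∈ S}).toReal ≤ t / a ^ 2 := by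
  set p : ℕ → ℝ := fun k => Real.exp (-t) * t ^ k / k.factorial with hp
  have hp0 : ∀ k, 0 ≤ p k := fun k => by
    have := t.exp_pos
    positivity
  set q : ℕ → ℝ := fun k => (((k:ℝ) - t)^2 * p k) / a^2 with hq
  have hq0 : ∀ k, 0 ≤ q k := fun k => by
    have := hp0 k
    positivity
  have hqsum : Summable q := (summable_moment t).div_const _
  have htsumq : ∑' k, q k = t / a^2 := by
    rw [hq, tsum_div_const, poisson_moment]
  have key : μ {ω | N ω ∈ S} ≤ ENNReal.ofReal (t / a^2) := by
    have h1 : {ω | N ω ∈ S} = N ⁻¹' S := rfl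
    rw [h1, ← tsum_measure_preimage_singleton (Set.to_countable S)
      (fun k _ => hN (measurableSet_singleton k))]
    have h2 : ∀ k : S, μ (N ⁻¹' {(k:ℕ)}) ≤ ENNReal.ofReal (q k) := by
      rintro ⟨k, hk⟩
      have hpk : μ (N ⁻¹' {k}) = ENNReal.ofReal (p k) := hpois k
      rw [hpk]
      refine ENNReal.ofReal_le_ofReal ?_
      have h3 : a^2 * p k ≤ ((k:ℝ) - t)^2 * p k :=
        mul_le_mul_of_nonneg_right (hS k hk) (hp0 k)
      have ha2 : (0:ℝ) < a^2 := by positivity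
      rw [hq]
      exact (le_div_iff₀ ha2).mpr (by linarith)
    calc ∑' k : S, μ (N ⁻¹' {(k:ℕ)})
        ≤ ∑' k : S, ENNReal.ofReal (q k) := ENNReal.tsum_le_tsum h2
      _ ≤ ∑' k : ℕ, ENNReal.ofReal (q k) :=
          ENNReal.tsum_comp_le_tsum_of_injective Subtype.val_injective _
      _ = ENNReal.ofReal (∑' k, q k) := (ENNReal.ofReal_tsum_of_nonneg hq0 hqsum).symm
      _ = ENNReal.ofReal (t / a^2) := by rw [htsumq]
  exact ENNReal.toReal_le_of_le_ofReal (by positivity) key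

lemma cheb_to_bound {t b : ℝ} (ht : 0 < t) (h : t ^ ((4:ℝ)/3) ≤ b) :
    t / b ≤ t ^ (-(1:ℝ)/3) := by
  have hb : 0 < b := lt_of_lt_of_le (Real.rpow_pos_of_pos ht _) h
  have h3 : (0:ℝ) < t ^ ((1:ℝ)/3) := Real.rpow_pos_of_pos ht _
  rw [neg_div, Real.rpow_neg ht.le, inv_eq_one_div, div_le_div_iff₀ hb h3]
  have h4 : t ^ ((4:ℝ)/3) = t * t ^ ((1:ℝ)/3) := by
    rw [show (4:ℝ)/3 = 1 + 1/3 by norm_num, Real.rpow_add ht, Real.rpow_one]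
  linarith

/-- Coupling of the covering time `T` and the number of draws `D` in a rate-1
marked Poisson coupon process.  `N t` is the Poisson(t) number of arrivals up
to time `t`; `D` is the number of arrivals up to and including the covering
time `T`, which is expressed by the relation `T ≤ t ↔ D ≤ N t` for `t ≥ 0`.
Then for all sufficiently large `d`,
`F_D(d) ≤ F_T(d + d^{3/4}) + (d + d^{3/4})^{-1/3}` and
`F_D(d) ≥ F_T(d - d^{3/4}) - (d - d^{3/4})^{-1/3}`. -/
theorem coupling_cdf_bounds
    {Ω : Type*} [MeasurableSpace Ω] (μ : Measure Ω) [IsProbabilityMeasure μ]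
    (T : Ω → ℝ) (D : Ω → ℕ) (N : ℝ → Ω → ℕ)
    (hTmeas : Measurable T) (hDmeas : Measurable D)
    (hNmeas : ∀ t, Measurable (N t))
    (hTpos : ∀ ω, 0 ≤ T ω)
    (hpois : ∀ t : ℝ, 0 < t → ∀ k : ℕ,
      μ {ω | N t ω = k} = ENNReal.ofReal (Real.exp (-t) * t ^ k / (Nat.factorial k)))
    (hcount : ∀ ω, ∀ t : ℝ, 0 ≤ t → (T ω ≤ t ↔ D ω ≤ N t ω)) :
    ∃ d₀ : ℝ, ∀ d : ℝ, d₀ ≤ d →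
      (μ {ω | (D ω : ℝ) ≤ d}).toReal ≤
          (μ {ω | T ω ≤ d + d ^ ((3 : ℝ)/4)}).toReal +
            (d + d ^ ((3 : ℝ)/4)) ^ (-(1 : ℝ)/3) ∧
      (μ {ω | T ω ≤ d - d ^ ((3 : ℝ)/4)}).toReal -
          (d - d ^ ((3 : ℝ)/4)) ^ (-(1 : ℝ)/3) ≤
        (μ {ω | (D ω : ℝ) ≤ d}).toReal := by
  refine ⟨65536, fun d hd => ?_⟩
  set a := d ^ ((3:ℝ)/4) with ha
  have hd0 : (0:ℝ) < d := by linarith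
  have hd1 : (1:ℝ) < d := by linarith
  have ha0 : 0 < a := Real.rpow_pos_of_pos hd0 _
  have haltd : a < d := by
    have := Real.rpow_lt_rpow_of_exponent_lt hd1 (show (3:ℝ)/4 < 1 by norm_num)
    rwa [Real.rpow_one] at this
  have hasq : a ^ 2 = d ^ ((3:ℝ)/2) := by
    rw [ha, ← Real.rpow_natCast (d ^ ((3:ℝ)/4)) 2, ← Real.rpow_mul hd0.le]
    norm_num
  have h18 : (4:ℝ) ≤ d ^ ((1:ℝ)/8) := by
    have h4 : ((4:ℝ) ^ (8:ℕ)) ^ ((1:ℝ)/8) = 4 := by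
      rw [← Real.rpow_natCast (4:ℝ) 8, ← Real.rpow_mul (by norm_num)]
      norm_num
    calc (4:ℝ) = ((4:ℝ)^(8:ℕ)) ^ ((1:ℝ)/8) := h4.symm
      _ ≤ d ^ ((1:ℝ)/8) :=
        Real.rpow_le_rpow (by positivity) (by norm_num; linarith) (by norm_num)
  set tp := d + a with htp
  have htp0 : (0:ℝ) < tp := by linarith
  have htple : tp ≤ d ^ ((9:ℝ)/8) := by
    have hmul : d ^ ((9:ℝ)/8) = d ^ ((1:ℝ)/8) * d := by
      rw [show (9:ℝ)/8 = 1/8 + 1 by norm_num, Real.rpow_add hd0, Real.rpow_one]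
    nlinarith
  have htp43 : tp ^ ((4:ℝ)/3) ≤ a ^ 2 := by
    rw [hasq]
    calc tp ^ ((4:ℝ)/3) ≤ (d ^ ((9:ℝ)/8)) ^ ((4:ℝ)/3) :=
        Real.rpow_le_rpow htp0.le htple (by norm_num)
      _ = d ^ ((3:ℝ)/2) := by
        rw [← Real.rpow_mul hd0.le]; norm_num
  set tm := d - a with htm
  have htm0 : (0:ℝ) < tm := by linarith
  have htm43 : tm ^ ((4:ℝ)/3) ≤ a ^ 2 := by
    rw [hasq]
    calc tm ^ ((4:ℝ)/3) ≤ d ^ ((4:ℝ)/3) :=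
        Real.rpow_le_rpow htm0.le (by linarith) (by norm_num)
      _ ≤ d ^ ((3:ℝ)/2) := Real.rpow_le_rpow_of_exponent_le hd1.le (by norm_num)
  have chebp := poisson_cheb μ (N tp) (hNmeas tp) tp a htp0 ha0 (hpois tp htp0)
    {k : ℕ | (k:ℝ) < d} (fun k hk => by
      have hk' : (k:ℝ) < d := hk
      nlinarith [sq_nonneg ((k:ℝ) - tp + a)])
  have chebm := poisson_cheb μ (N tm) (hNmeas tm) tm a htm0 ha0 (hpois tm htm0)
    {k : ℕ | d < (k:ℝ)} (fun k hk => by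
      have hk' : d < (k:ℝ) := hk
      nlinarith [sq_nonneg ((k:ℝ) - tm - a)])
  have hbp : tp / a^2 ≤ tp ^ (-(1:ℝ)/3) := cheb_to_bound htp0 htp43
  have hbm : tm / a^2 ≤ tm ^ (-(1:ℝ)/3) := cheb_to_bound htm0 htm43
  constructor
  · have hsub : {ω | (D ω : ℝ) ≤ d} ⊆
        {ω | T ω ≤ tp} ∪ {ω | N tp ω ∈ {k : ℕ | (k:ℝ) < d}} := by
      intro ω hω
      by_cases hT : T ω ≤ tp
      · exact Or.inl hT
      · right
        have hnd : ¬ (D ω ≤ N tp ω) := fun h => hT ((hcount ω tp htp0.le).mpr h)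
        have hlt : N tp ω < D ω := Nat.lt_of_not_le hnd
        show ((N tp ω : ℝ)) < d
        exact lt_of_lt_of_le (by exact_mod_cast hlt) hω
    have h1 : μ {ω | (D ω : ℝ) ≤ d} ≤
        μ {ω | T ω ≤ tp} + μ {ω | N tp ω ∈ {k : ℕ | (k:ℝ) < d}} :=
      (measure_mono hsub).trans (measure_union_le _ _)
    have h2 := ENNReal.toReal_mono
      (ENNReal.add_ne_top.mpr ⟨measure_ne_top μ _, measure_ne_top μ _⟩) h1
    rw [ENNReal.toReal_add (measure_ne_top μ _) (measure_ne_top μ _)] at h2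
    linarith
  · have hsub : {ω | T ω ≤ tm} ⊆
        {ω | (D ω : ℝ) ≤ d} ∪ {ω | N tm ω ∈ {k : ℕ | d < (k:ℝ)}} := by
      intro ω hω
      have hD : D ω ≤ N tm ω := (hcount ω tm htm0.le).mp hω
      by_cases hd' : (D ω : ℝ) ≤ d
      · exact Or.inl hd'
      · right
        show d < ((N tm ω : ℝ))
        push_neg at hd'
        exact lt_of_lt_of_le hd' (by exact_mod_cast hD)
    have h1 : μ {ω | T ω ≤ tm} ≤
        μ {ω | (D ω : ℝ) ≤ d} + μ {ω | N tm ω ∈ {k : ℕ | d < (k:ℝ)}} :=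
      (measure_mono hsub).trans (measure_union_le _ _)
    have h2 := ENNReal.toReal_mono
      (ENNReal.add_ne_top.mpr ⟨measure_ne_top μ _, measure_ne_top μ _⟩) h1
    rw [ENNReal.toReal_add (measure_ne_top μ _) (measure_ne_top μ _)] at h2
    linarith
end

section
/- Fix λ > 0. There exists θ_1 > 0 such that for all sufficiently large n and every c ≤ 0, ∑_{i=0}^{n-1} (e^{-c} log n / n)^{e^λ (1-λ/n)^i} ≥ e^{-c(1-o(1))} · θ_1; in particular one may take θ_1 = e^{-λ}, with the sum bounded below by e^{-λ}·(e^{-c})^{1-o(1)} where the o(1) is uniform in c ≤ 0. -/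
open Filter Real Finset

/-! Write `t = log n / n` and `pᵢ = e^λ (1 - λ/n)^i`, so the terms are `e^{-c pᵢ} t^{pᵢ}`. All
exponents are at least `e^λ (1 - λ/n)^n → 1`, which takes care of the factor `e^{-c}` and gives
`ε`. For the remaining sum of `t^{pᵢ}`, the last `k = ⌈n / log n⌉ ≈ 1/t` exponents are at most
`e^{λk/n} ≈ 1 + λ / log n`, and `t^{λ / log n} = e^{-λ (1 - log log n / log n)}`: the gain
`log log n` pays for the second-order error in `e^{λk/n}`, so these `k` terms already sum to at
least `e^{-λ}`. -/

lemma exp_sub_one_mul_le {x d l : ℝ} (hl : 0 ≤ l) (hd : 0 < d) (hx : x * (d + l) ≤ l) :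
    (exp x - 1) * d ≤ l := by
  have hx₁ : x < 1 := by nlinarith
  have hexp : exp x * (1 - x) ≤ 1 :=
    calc exp x * (1 - x) ≤ exp x * exp (-x) := by gcongr; exact one_sub_le_exp_neg x
      _ = 1 := by rw [← exp_add, add_neg_cancel, exp_zero]
  have : (exp x - 1) * d * (1 - x) ≤ l * (1 - x) := by nlinarith
  exact le_of_mul_le_mul_right this (by linarith)

lemma one_sub_pow_le_exp_neg_mul {y : ℝ} (hy : y ≤ 1) (m : ℕ) :
    (1 - y) ^ m ≤ exp (-(m * y)) :=
  calc (1 - y) ^ m ≤ exp (-y) ^ m := pow_le_pow_left₀ (by linarith) (one_sub_le_exp_neg y) m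
    _ = exp (-(m * y)) := by rw [← exp_nat_mul, mul_neg]

lemma card_mul_rpow_le_sum_range {t a q : ℝ} {n k : ℕ} (ht₀ : 0 < t) (ht₁ : t ≤ 1) (ha : 0 ≤ a)
    (hq₀ : 0 ≤ q) (hq₁ : q ≤ 1) (hk : k ≤ n) :
    k * t ^ (a * q ^ (n - k)) ≤ ∑ i ∈ range n, t ^ (a * q ^ i) :=
  calc (k : ℝ) * t ^ (a * q ^ (n - k)) = ∑ _i ∈ Ico (n - k) n, t ^ (a * q ^ (n - k)) := by
        rw [sum_const, Nat.card_Ico, Nat.sub_sub_self hk, nsmul_eq_mul]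
    _ ≤ ∑ i ∈ Ico (n - k) n, t ^ (a * q ^ i) := sum_le_sum fun i hi =>
        rpow_le_rpow_of_exponent_ge ht₀ ht₁
          (mul_le_mul_of_nonneg_left (pow_le_pow_of_le_one hq₀ hq₁ (mem_Ico.1 hi).1) ha)
    _ ≤ ∑ i ∈ range n, t ^ (a * q ^ i) :=
        sum_le_sum_of_subset_of_nonneg (fun i hi => mem_range.2 (mem_Ico.1 hi).2)
          fun _ _ _ => rpow_nonneg ht₀.le _

lemma eventually_log_sq_le_self : ∀ᶠ x : ℝ in atTop, log x ^ 2 ≤ x := by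
  filter_upwards [(isLittleO_pow_log_id_atTop (n := 2)).bound one_pos, eventually_ge_atTop 0]
    with x hx hx₀
  rw [one_mul, norm_pow, norm_eq_abs, sq_abs, id, norm_of_nonneg hx₀] at hx
  exact hx

lemma exp_neg_le_mul_rpow_exp {l k : ℝ} {n : ℕ} (hl : 0 ≤ l) (hlog : l + 1 ≤ log (log n))
    (hn : log n ^ 2 ≤ n) (hk₁ : n / log n ≤ k) (hk₂ : k ≤ n / log n + 1) :
    exp (-l) ≤ k * (log n / n) ^ exp (l * k / n) := by
  set L := log (n : ℝ)
  have hL : 1 < L := (log_pos_iff (log_natCast_nonneg n)).1 (by linarith)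
  have hn₀ : (0 : ℝ) < n := by nlinarith
  have hlogL : log L ≤ L - 1 := log_le_sub_one_of_pos (by linarith)
  have hx : l * k / n * (L - log L + l) ≤ l := by
    have hkn : k / n ≤ 1 / L + 1 / n := by
      have : (1 / L + 1 / n) * n = n / L + 1 := by field_simp
      rw [div_le_iff₀ hn₀, this]
      exact hk₂
    have hinv : (1 / L + 1 / n) * (L - 1) ≤ 1 :=
      calc (1 / L + 1 / n) * (L - 1) ≤ (1 / L + 1 / L ^ 2) * (L - 1) := by gcongr
        _ ≤ 1 := by field_simp; nlinarith
    calc l * k / n * (L - log L + l) = l * (k / n) * (L - log L + l) := by ring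
      _ ≤ l * (1 / L + 1 / n) * (L - 1) := by gcongr <;> linarith
      _ ≤ l := by nlinarith
  have hexp_sub_one := exp_sub_one_mul_le hl (by linarith) hx
  have hpow : exp (-l) ≤ (L / n) ^ (exp (l * k / n) - 1) := by
    rw [rpow_def_of_pos (by positivity), log_div (by positivity) hn₀.ne', exp_le_exp]
    nlinarith
  have hkL : 1 ≤ k * (L / n) := by
    rw [div_le_iff₀ (by linarith)] at hk₁
    rw [mul_div_assoc']
    exact (one_le_div hn₀).2 hk₁
  calc exp (-l) ≤ k * (L / n) * (L / n) ^ (exp (l * k / n) - 1) := by nlinarith [exp_pos (-l)]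
    _ = k * (L / n) ^ exp (l * k / n) := by
      rw [mul_assoc, ← rpow_one_add' (by positivity) (by rw [add_sub_cancel]; positivity),
        add_sub_cancel]

lemma eventually_exp_neg_le_sum_rpow {l : ℝ} (hl : 0 ≤ l) :
    ∀ᶠ n : ℕ in atTop, exp (-l) ≤ ∑ i ∈ range n, (log n / n) ^ (exp l * (1 - l / n) ^ i) := by
  have hlog : ∀ᶠ n : ℕ in atTop, l + 1 ≤ log (log n) :=
    ((tendsto_log_atTop.comp tendsto_log_atTop).comp
      tendsto_natCast_atTop_atTop).eventually_ge_atTop _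
  filter_upwards [hlog, tendsto_natCast_atTop_atTop.eventually eventually_log_sq_le_self,
    eventually_ge_atTop ⌈l⌉₊] with n hlog hsq hln
  set L := log (n : ℝ)
  have hL : 1 < L := (log_pos_iff (log_natCast_nonneg n)).1 (by linarith)
  have hn₀ : (0 : ℝ) < n := by nlinarith
  have hln : l ≤ n := Nat.ceil_le.1 hln
  set k := ⌈n / L⌉₊
  have hkn : k ≤ n := Nat.ceil_le.2 (div_le_self hn₀.le hL.le)
  have ht₀ : 0 < L / n := div_pos (by linarith) hn₀
  have ht₁ : L / n ≤ 1 := (div_le_one hn₀).2 (by linarith [log_le_sub_one_of_pos hn₀])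
  have hexp : exp l * (1 - l / n) ^ (n - k) ≤ exp (l * k / n) :=
    calc exp l * (1 - l / n) ^ (n - k) ≤ exp l * exp (-((n - k : ℕ) * (l / n))) := by
          gcongr; exact one_sub_pow_le_exp_neg_mul ((div_le_one hn₀).2 hln) _
      _ = exp (l * k / n) := by
          rw [← exp_add, Nat.cast_sub hkn]; congr 1; field_simp; ring
  calc exp (-l) ≤ k * (L / n) ^ exp (l * k / n) :=
        exp_neg_le_mul_rpow_exp hl hlog hsq (Nat.le_ceil _)
          (Nat.ceil_lt_add_one (by positivity)).le
    _ ≤ k * (L / n) ^ (exp l * (1 - l / n) ^ (n - k)) :=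
        mul_le_mul_of_nonneg_left (rpow_le_rpow_of_exponent_ge ht₀ ht₁ hexp) k.cast_nonneg
    _ ≤ ∑ i ∈ range n, (L / n) ^ (exp l * (1 - l / n) ^ i) :=
        card_mul_rpow_le_sum_range ht₀ ht₁ (exp_pos l).le
          (sub_nonneg.2 ((div_le_one hn₀).2 hln)) (by linarith [div_nonneg hl hn₀.le]) hkn

lemma exp_neg_mul_mul_rpow_le {c m p s : ℝ} (hc : c ≤ 0) (hs : 0 ≤ s) (hmp : m ≤ p) :
    exp (-c * m) * s ^ p ≤ (exp (-c) * s) ^ p := by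
  rw [mul_rpow (exp_pos _).le hs, ← exp_mul]
  gcongr
  linarith

lemma tendsto_one_sub_exp_mul_one_sub_div_pow (l : ℝ) :
    Tendsto (fun n : ℕ => 1 - exp l * (1 - l / n) ^ n) atTop (nhds 0) := by
  have h := (tendsto_one_add_div_pow_exp (-l)).const_mul (exp l)
  rw [← exp_add, add_neg_cancel, exp_zero] at h
  simpa [sub_eq_add_neg, neg_div] using h.const_sub 1

/-- Lower bound for the key sum, uniformly over `c ≤ 0`:
`∑_{i=0}^{n-1} (e^{-c} log n / n)^{e^λ (1-λ/n)^i} ≥ e^{-c(1-o(1))} · e^{-λ}`. -/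
theorem sum_rpow_lower_bound (l : ℝ) (hl : 0 < l) :
    ∃ ε : ℕ → ℝ, Tendsto ε atTop (nhds 0) ∧
      ∀ᶠ n : ℕ in atTop, ∀ c : ℝ, c ≤ 0 →
        Real.exp (-c * (1 - ε n)) * Real.exp (-l) ≤
          ∑ i ∈ Finset.range n,
            (Real.exp (-c) * Real.log n / n) ^ (Real.exp l * (1 - l / n) ^ (i : ℕ)) := by
  refine ⟨_, tendsto_one_sub_exp_mul_one_sub_div_pow l, ?_⟩
  filter_upwards [eventually_exp_neg_le_sum_rpow hl.le, eventually_ge_atTop ⌈l⌉₊]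
    with n hsum hln c hc
  have hq₀ : 0 ≤ 1 - l / n := sub_nonneg.2 (div_le_one_of_le₀ (Nat.ceil_le.1 hln) n.cast_nonneg)
  have hq₁ : 1 - l / n ≤ 1 := by linarith [div_nonneg hl.le n.cast_nonneg]
  have hexponent : ∀ i ∈ range n, exp l * (1 - l / n) ^ n ≤ exp l * (1 - l / n) ^ i :=
    fun i hi => mul_le_mul_of_nonneg_left (pow_le_pow_of_le_one hq₀ hq₁ (mem_range.1 hi).le)
      (exp_pos l).le
  rw [sub_sub_cancel]
  calc exp (-c * (exp l * (1 - l / n) ^ n)) * exp (-l)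
      ≤ ∑ i ∈ range n, exp (-c * (exp l * (1 - l / n) ^ n)) *
          (log n / n) ^ (exp l * (1 - l / n) ^ i) := by
        rw [← mul_sum]; gcongr
    _ ≤ ∑ i ∈ range n, (exp (-c) * log n / n) ^ (exp l * (1 - l / n) ^ i) :=
        sum_le_sum fun i hi => by
          rw [mul_div_assoc]
          exact exp_neg_mul_mul_rpow_le hc (by positivity) (hexponent i hi)
end

section
/- Fix λ > 0. There exists θ_2 > 0 such that for all sufficiently large n and every c ≥ 0, ∑_{i=0}^{n-1} (e^{-c} log n / n)^{e^λ (1-λ/n)^i} ≤ e^{-c(1-o(1))} · θ_2 · log log n; one may take θ_2 = 2/λ. -/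
/-!
Write `y = e^{-c} log n / n`, `t = λ / n` and `a = e^λ (1 - t)^{n-1}` for the smallest exponent;
then `a ≥ 1 - 2λ²/n`. Since `(1 - t)^{-k} ≥ 1 + k t`, the term with exponent `e^λ (1 - t)^{n-1-k}`
is at most `y^a (y^{a t})^k`, so the sum is at most `y^a / (1 - y^{a t})`. The numerator is at most
`e^{-c(1 - 2λ²/n)} · 2 log n / n`, and as `y ≤ n^{-1/2}` the denominator is at least
`λ log n / (8 n)`. The quotient is therefore at most `e^{-c(1 - 2λ²/n)} · 16 / λ`, which is below
the claimed bound as soon as `log log n ≥ 8`.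
-/

open Filter Real Finset

lemma one_sub_pow_mul_one_add_le_one {t : ℝ} (ht : t ≤ 1) (k : ℕ) :
    (1 - t) ^ k * (1 + k * t) ≤ 1 := by
  rcases le_or_gt 0 (1 + k * t) with h | h
  · calc (1 - t) ^ k * (1 + k * t) ≤ exp (-t) ^ k * exp (k * t) := by
          have h1 : 1 - t ≤ exp (-t) := by linarith [add_one_le_exp (-t)]
          have h2 : 1 + k * t ≤ exp (k * t) := by linarith [add_one_le_exp (k * t)]
          gcongr
      _ = 1 := by rw [← exp_nat_mul, ← exp_add]; simp
  · exact (mul_nonpos_of_nonneg_of_nonpos (pow_nonneg (by linarith) k) h.le).trans zero_le_one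

lemma sum_rpow_mul_one_sub_pow_le {y b t : ℝ} (hy0 : 0 < y) (hy1 : y < 1) (hb : 0 < b)
    (ht0 : 0 < t) (ht1 : t < 1) (n : ℕ) :
    ∑ i ∈ range n, y ^ (b * (1 - t) ^ i) ≤
      y ^ (b * (1 - t) ^ (n - 1)) / (1 - y ^ (b * (1 - t) ^ (n - 1) * t)) := by
  have hq : 0 < 1 - t := by linarith
  set a := b * (1 - t) ^ (n - 1)
  have ha : 0 < a := by positivity
  set r := y ^ (a * t)
  have hr1 : r < 1 := rpow_lt_one hy0.le hy1 (by positivity)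
  have term : ∀ i ∈ range n, y ^ (b * (1 - t) ^ i) ≤ y ^ a * r ^ (n - 1 - i) := by
    intro i hi
    have hexp : a * (1 + (n - 1 - i : ℕ) * t) ≤ b * (1 - t) ^ i := by
      have hsplit : a = b * (1 - t) ^ i * (1 - t) ^ (n - 1 - i) := by
        rw [mul_assoc, ← pow_add, Nat.add_sub_cancel' (by have := mem_range.mp hi; omega)]
      rw [hsplit, mul_assoc]
      exact mul_le_of_le_one_right (by positivity)
        (one_sub_pow_mul_one_add_le_one ht1.le _)
    calc y ^ (b * (1 - t) ^ i) ≤ y ^ (a * (1 + (n - 1 - i : ℕ) * t)) :=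
          rpow_le_rpow_of_exponent_ge hy0 hy1.le hexp
      _ = y ^ a * r ^ (n - 1 - i) := by
          rw [← rpow_natCast, ← rpow_mul hy0.le, ← rpow_add hy0]; congr 1; ring
  calc ∑ i ∈ range n, y ^ (b * (1 - t) ^ i) ≤ ∑ i ∈ range n, y ^ a * r ^ (n - 1 - i) :=
        sum_le_sum term
    _ = y ^ a * ∑ k ∈ range n, r ^ k := by rw [← mul_sum, sum_range_reflect (r ^ ·) n]
    _ ≤ y ^ a * (1 / (1 - r)) := by
        gcongr
        simpa using geom_sum_Ico_le_of_lt_one (m := 0) (n := n) (by positivity) hr1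
    _ = y ^ a / (1 - r) := by ring

lemma exp_neg_le_one_sub_pow {t : ℝ} (ht : t ≤ 1 / 2) (m : ℕ) :
    exp (-(m * t * (1 + 2 * t))) ≤ (1 - t) ^ m := by
  have hq : 0 < 1 - t := by linarith
  have h : exp (-(t * (1 + 2 * t))) ≤ 1 - t := by
    rw [← le_log_iff_exp_le hq]
    refine le_trans ?_ (one_sub_inv_le_log_of_pos hq)
    rw [inv_eq_one_div, le_sub_comm, div_le_iff₀ hq]
    nlinarith [sq_nonneg t]
  calc exp (-(m * t * (1 + 2 * t))) = exp (-(t * (1 + 2 * t))) ^ m := by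
        rw [← exp_nat_mul]; congr 1; ring
    _ ≤ (1 - t) ^ m := by gcongr

lemma one_sub_le_exp_mul_one_sub_div_pow {l : ℝ} (hl : 0 ≤ l) {n : ℕ} (hln : l / n ≤ 1 / 2) :
    1 - 2 * l ^ 2 / n ≤ exp l * (1 - l / n) ^ (n - 1) := by
  have hmul : ((n - 1 : ℕ) : ℝ) * (l / n) ≤ l := by
    rcases Nat.eq_zero_or_pos n with rfl | hn
    · simp [hl]
    · calc ((n - 1 : ℕ) : ℝ) * (l / n) ≤ n * (l / n) := by gcongr; exact_mod_cast Nat.sub_le n 1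
        _ = l := by field_simp
  calc 1 - 2 * l ^ 2 / n ≤ exp (-(2 * l ^ 2 / n)) := by
        linarith [add_one_le_exp (-(2 * l ^ 2 / n))]
    _ = exp l * exp (-(l * (1 + 2 * (l / n)))) := by rw [← exp_add]; congr 1; ring
    _ ≤ exp l * exp (-((n - 1 : ℕ) * (l / n) * (1 + 2 * (l / n)))) := by
        gcongr
    _ ≤ exp l * (1 - l / n) ^ (n - 1) := by
        gcongr
        exact exp_neg_le_one_sub_pow hln _

lemma log_le_self_div_two {y : ℝ} (hy : 0 < y) : log y ≤ y / 2 := by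
  have h : log (√y) ≤ √y - 1 := log_le_sub_one_of_pos (sqrt_pos.mpr hy)
  rw [log_sqrt hy.le] at h
  nlinarith [sq_sqrt hy.le, sq_nonneg (√y - 2)]

lemma half_le_one_sub_exp_neg {x : ℝ} (hx0 : 0 ≤ x) (hx1 : x ≤ 1) : x / 2 ≤ 1 - exp (-x) := by
  have h : exp (-x) * (1 + x) ≤ 1 := by
    calc exp (-x) * (1 + x) ≤ exp (-x) * exp x := by gcongr; linarith [add_one_le_exp x]
      _ = 1 := by rw [← exp_add]; simp
  nlinarith [exp_pos (-x)]

lemma exp_neg_mul_rpow_le {c u a E : ℝ} (hc : 0 ≤ c) (hu0 : 0 < u) (hu1 : u ≤ 1)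
    (ha : 1 - E ≤ a) : (exp (-c) * u) ^ a ≤ exp (-c * (1 - E)) * u ^ (1 - E) := by
  rw [mul_rpow (exp_pos _).le hu0.le, ← exp_mul]
  exact mul_le_mul (exp_le_exp.mpr (by nlinarith)) (rpow_le_rpow_of_exponent_ge hu0 hu1 ha)
    (by positivity) (exp_pos _).le

lemma log_div_rpow_one_sub_le {N E : ℝ} (hN : 0 < N) (hlogN : 1 ≤ log N) (hE : 0 ≤ E)
    (hEN : E * log N ≤ log 2) : (log N / N) ^ (1 - E) ≤ 2 * (log N / N) := by
  have hu0 : 0 < log N / N := by positivity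
  have hpow : 1 / 2 ≤ (log N / N) ^ E :=
    calc 1 / 2 = exp (-log 2) := by rw [exp_neg, exp_log two_pos, one_div]
      _ ≤ exp (log N⁻¹ * E) := by rw [log_inv]; gcongr; linarith
      _ = N⁻¹ ^ E := (rpow_def_of_pos (inv_pos.mpr hN) E).symm
      _ ≤ (log N / N) ^ E := by
          gcongr
          rw [inv_eq_one_div]
          gcongr
  rw [rpow_sub hu0, rpow_one, div_le_iff₀ (by positivity)]
  nlinarith

lemma mul_log_div_le_one_sub_rpow {N y a t : ℝ} (hN : 0 < N) (hlogN : 0 < log N) (hy0 : 0 < y)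
    (hy : y ≤ log N / N) (ha : 1 / 2 ≤ a) (ht : 0 ≤ t) (hx : t * log N ≤ 4) :
    t * log N / 8 ≤ 1 - y ^ (a * t) := by
  have hy1 : y ≤ 1 :=
    hy.trans ((div_le_one hN).mpr ((log_le_sub_one_of_pos hN).trans (by linarith)))
  have hlogy : log y ≤ -(log N / 2) :=
    calc log y ≤ log (log N / N) := log_le_log hy0 hy
      _ = log (log N) - log N := log_div hlogN.ne' hN.ne'
      _ ≤ -(log N / 2) := by linarith [log_le_self_div_two hlogN]
  have hr : y ^ (a * t) ≤ exp (-(t * log N / 4)) :=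
    calc y ^ (a * t) ≤ y ^ (t / 2) := rpow_le_rpow_of_exponent_ge hy0 hy1 (by nlinarith)
      _ = exp (log y * (t / 2)) := rpow_def_of_pos hy0 _
      _ ≤ exp (-(t * log N / 4)) := by gcongr; nlinarith
  linarith [half_le_one_sub_exp_neg (x := t * log N / 4) (by positivity) (by linarith)]

lemma tendsto_const_div_natCast_mul_log (k : ℝ) :
    Tendsto (fun n : ℕ => k / n * log n) atTop (nhds 0) := by
  have hlog := isLittleO_log_id_atTop.tendsto_div_nhds_zero.comp tendsto_natCast_atTop_atTop
  simpa [mul_div_assoc', div_mul_eq_mul_div] using hlog.const_mul k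

lemma sum_rpow_exp_mul_one_sub_div_pow_le {l : ℝ} (hl : 0 < l) {n : ℕ} (hll : 8 ≤ log (log n))
    (ht : l / n ≤ 1 / 2) (hE : 2 * l ^ 2 / n ≤ 1 / 2) (hx : l / n * log n ≤ 4)
    (hEN : 2 * l ^ 2 / n * log n ≤ log 2) {c : ℝ} (hc : 0 ≤ c) :
    ∑ i ∈ range n, (exp (-c) * log n / n) ^ (exp l * (1 - l / n) ^ i)
      ≤ exp (-c * (1 - 2 * l ^ 2 / n)) * (2 / l) * log (log n) := by
  have ha := one_sub_le_exp_mul_one_sub_div_pow hl.le ht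
  simp_rw [mul_div_assoc (exp (-c))]
  set N : ℝ := (n : ℝ)
  set u := log N / N
  set E := 2 * l ^ 2 / N
  set a := exp l * (1 - l / N) ^ (n - 1)
  have hlogN : 1 < log N := (log_pos_iff (log_natCast_nonneg n)).mp (by linarith)
  have hN : 0 < N :=
    lt_of_le_of_ne n.cast_nonneg fun h => by rw [← h, log_zero] at hlogN; linarith
  have hu0 : 0 < u := by positivity
  have hu1 : u < 1 := (div_lt_one hN).mpr ((log_le_sub_one_of_pos hN).trans_lt (by linarith))
  have hy0 : 0 < exp (-c) * u := by positivity
  have hyu : exp (-c) * u ≤ u := mul_le_of_le_one_left hu0.le (exp_le_one_iff.mpr (by linarith))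
  have ht0 : 0 < l / N := by positivity
  have hnum : (exp (-c) * u) ^ a ≤ exp (-c * (1 - E)) * (2 * u) :=
    calc (exp (-c) * u) ^ a ≤ exp (-c * (1 - E)) * u ^ (1 - E) :=
          exp_neg_mul_rpow_le hc hu0 hu1.le ha
      _ ≤ exp (-c * (1 - E)) * (2 * u) := by
          gcongr
          exact log_div_rpow_one_sub_le hN hlogN.le (by positivity) (by linarith)
  have hden : l / N * log N / 8 ≤ 1 - (exp (-c) * u) ^ (a * (l / N)) :=
    mul_log_div_le_one_sub_rpow hN (by linarith) hy0 hyu (by linarith) ht0.le (by linarith)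
  calc ∑ i ∈ range n, (exp (-c) * u) ^ (exp l * (1 - l / N) ^ i)
      ≤ (exp (-c) * u) ^ a / (1 - (exp (-c) * u) ^ (a * (l / N))) :=
        sum_rpow_mul_one_sub_pow_le hy0 (hyu.trans_lt hu1) (exp_pos l) ht0 (by linarith) n
    _ ≤ exp (-c * (1 - E)) * (2 * u) / (l / N * log N / 8) :=
        div_le_div₀ (by positivity) hnum (by positivity) hden
    _ = exp (-c * (1 - E)) * (2 / l) * 8 := by simp only [u]; field_simp
    _ ≤ exp (-c * (1 - E)) * (2 / l) * log (log N) := by gcongr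

/-- Upper bound for the key sum, uniformly over `c ≥ 0`:
`∑_{i=0}^{n-1} (e^{-c} log n / n)^{e^λ (1-λ/n)^i} ≤ e^{-c(1-o(1))} · (2/λ) · log log n`. -/
theorem sum_rpow_upper_bound (l : ℝ) (hl : 0 < l) :
    ∃ ε : ℕ → ℝ, Tendsto ε atTop (nhds 0) ∧
      ∀ᶠ n : ℕ in atTop, ∀ c : ℝ, 0 ≤ c →
        ∑ i ∈ Finset.range n,
            (Real.exp (-c) * Real.log n / n) ^ (Real.exp l * (1 - l / n) ^ (i : ℕ))
          ≤ Real.exp (-c * (1 - ε n)) * (2 / l) * Real.log (Real.log n) := by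
  refine ⟨fun n => 2 * l ^ 2 / n, tendsto_const_div_atTop_nhds_zero_nat _, ?_⟩
  have hloglog : Tendsto (fun n : ℕ => log (log n)) atTop atTop :=
    tendsto_log_atTop.comp (tendsto_log_atTop.comp tendsto_natCast_atTop_atTop)
  have hhalf : (0 : ℝ) < 1 / 2 := by norm_num
  filter_upwards [hloglog.eventually_ge_atTop 8,
    (tendsto_const_div_atTop_nhds_zero_nat l).eventually (eventually_le_nhds hhalf),
    (tendsto_const_div_atTop_nhds_zero_nat (2 * l ^ 2)).eventually (eventually_le_nhds hhalf),
    (tendsto_const_div_natCast_mul_log l).eventually (eventually_le_nhds four_pos),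
    (tendsto_const_div_natCast_mul_log (2 * l ^ 2)).eventually
      (eventually_le_nhds (log_pos one_lt_two))] with n hll ht hE hx hEN c hc
  exact sum_rpow_exp_mul_one_sub_div_pow_le hl hll ht hE hx hEN hc
end
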